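/- arXiv:1410.3079 — 6 statements merged into one kernel-verified Lean document; each statement's English description precedes it below -/
import Mathlib

section
/- Let L/K be an extension of real-valued fields such that K is dense in L (with respect to the metric induced by the absolute value), and let A → K be a homomorphism from a commutative ring A. Equip Ω_{K/A} and Ω_{L/A} with their Kähler seminorms, and equip Ω_{K/A} ⊗_K L with the tensor seminorm (viewing L as a seminormed K-module via its absolute value). Then the canonical L-linear map ψ : Ω_{K/A} ⊗_K L → Ω_{L/A} is an isometry (‖ψ(x)‖ = ‖x‖ for all x) and has dense image. -/
open scoped NNReal TensorProduct
open Filter Topology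

/-!
The bound `‖ψ x‖ ≤ ‖x‖` is formal: a representation `x = ∑ ωᵢ ⊗ lᵢ` is sent to `∑ lᵢ • ωᵢ`, and
`Ω[K⁄A] → Ω[L⁄A]` does not increase the Kähler seminorm.

For the reverse bound, pick for every `b ∈ L` a sequence `bₙ` in `K` with `bₙ → b`. Then
`b ↦ [(1 ⊗ d bₙ)ₙ]` is an `A`-derivation of `L` into the sequences of `L ⊗[K] Ω[K⁄A]` modulo
sequences tending to `0` for the tensor seminorm; its lift `Φ` to `Ω[L⁄A]` sends `ψ x` to the class
of the constant sequence `x`. Applying `Φ` to a representation `ψ x = ∑ cᵢ • d bᵢ` shows that `x` is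
a limit of the elements `∑ cᵢ ⊗ d bᵢₙ`, whose tensor seminorm is eventually below any
`t > max |cᵢ| |bᵢ|`.

Density of the image: in `∑ cᵢ • d bᵢ`, replace each `bᵢ` by a close element of `K`.
-/

/-- The Kähler seminorm on `Ω[B⁄A]` induced by a seminorm `vB` on `B`:
`‖x‖ = inf` over all representations `x = ∑ cᵢ • d bᵢ` of `max vB cᵢ * vB bᵢ`. -/
noncomputable def kahlerSeminorm (A B : Type*) [CommRing A] [CommRing B] [Algebra A B]
    (vB : B → ℝ≥0) (x : Ω[B⁄A]) : ℝ≥0 :=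
  sInf { r | ∃ (n : ℕ) (c b : Fin n → B),
    x = ∑ i, c i • KaehlerDifferential.D A B (b i) ∧
    r = Finset.univ.sup fun i => vB (c i) * vB (b i) }

/-- The tensor seminorm on `M ⊗[A] N`:
`‖x‖ = inf` over all representations `x = ∑ mᵢ ⊗ nᵢ` of `max vM mᵢ * vN nᵢ`. -/
noncomputable def tensorSeminorm (A M N : Type*) [CommRing A] [AddCommGroup M] [Module A M]
    [AddCommGroup N] [Module A N] (vM : M → ℝ≥0) (vN : N → ℝ≥0)
    (x : TensorProduct A M N) : ℝ≥0 :=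
  sInf { r | ∃ (n : ℕ) (m : Fin n → M) (w : Fin n → N),
    x = ∑ i, m i ⊗ₜ[A] w i ∧
    r = Finset.univ.sup fun i => vM (m i) * vN (w i) }

section InfRepSeminorm

variable {P Q M : Type*} [AddCommMonoid M] (g : P → Q → M) (wP : P → ℝ≥0) (wQ : Q → ℝ≥0)

/-- The common shape of `kahlerSeminorm` and `tensorSeminorm`: both are instances by `rfl`. -/
noncomputable def infRepSeminorm (x : M) : ℝ≥0 :=
  sInf { r | ∃ (n : ℕ) (p : Fin n → P) (q : Fin n → Q),
    x = ∑ i, g (p i) (q i) ∧ r = Finset.univ.sup fun i => wP (p i) * wQ (q i) }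

def IsSumGenerating : Prop :=
  ∀ x : M, ∃ (n : ℕ) (p : Fin n → P) (q : Fin n → Q), x = ∑ i, g (p i) (q i)

variable {g wP wQ}

theorem infRepSeminorm_le_of_eq_sum {ι : Type*} [Fintype ι] (p : ι → P) (q : ι → Q) {x : M}
    (hx : x = ∑ i, g (p i) (q i)) :
    infRepSeminorm g wP wQ x ≤ Finset.univ.sup fun i => wP (p i) * wQ (q i) := by
  let e := (Fintype.equivFin ι).symm
  refine csInf_le (OrderBot.bddBelow _) ⟨_, p ∘ e, q ∘ e, ?_, ?_⟩
  · rw [hx, ← e.sum_comp]; rfl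
  · simp_rw [Finset.sup_univ_eq_ciSup]
    exact (e.iSup_comp (g := fun i => wP (p i) * wQ (q i))).symm

theorem infRepSeminorm_apply_le (p : P) (q : Q) : infRepSeminorm g wP wQ (g p q) ≤ wP p * wQ q := by
  simpa using infRepSeminorm_le_of_eq_sum (g := g) (wP := wP) (wQ := wQ)
    (fun _ : Unit => p) (fun _ => q) (by simp)

@[simp]
theorem infRepSeminorm_zero : infRepSeminorm g wP wQ 0 = 0 := by
  simpa using infRepSeminorm_le_of_eq_sum (g := g) (wP := wP) (wQ := wQ)
    (Empty.elim : Empty → P) (Empty.elim : Empty → Q) (by simp)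

theorem le_infRepSeminorm {x : M} {b : ℝ≥0} (hg : IsSumGenerating g)
    (h : ∀ (n : ℕ) (p : Fin n → P) (q : Fin n → Q), x = ∑ i, g (p i) (q i) →
      b ≤ Finset.univ.sup fun i => wP (p i) * wQ (q i)) :
    b ≤ infRepSeminorm g wP wQ x := by
  obtain ⟨n, p, q, hx⟩ := hg x
  refine le_csInf ⟨_, n, p, q, hx, rfl⟩ ?_
  rintro _ ⟨n, p, q, hx, rfl⟩
  exact h n p q hx

theorem exists_eq_sum_of_infRepSeminorm_lt {x : M} {t : ℝ≥0} (hg : IsSumGenerating g)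
    (h : infRepSeminorm g wP wQ x < t) :
    ∃ (n : ℕ) (p : Fin n → P) (q : Fin n → Q), x = ∑ i, g (p i) (q i) ∧
      (Finset.univ.sup fun i => wP (p i) * wQ (q i)) < t := by
  by_contra! H
  exact h.not_ge (le_infRepSeminorm hg fun n p q hx => H n p q hx)

theorem infRepSeminorm_add_le (hg : IsSumGenerating g) (x y : M) :
    infRepSeminorm g wP wQ (x + y) ≤ max (infRepSeminorm g wP wQ x) (infRepSeminorm g wP wQ y) := by
  refine le_of_forall_gt_imp_ge_of_dense fun t ht => ?_
  obtain ⟨n₁, p₁, q₁, rfl, h₁⟩ := exists_eq_sum_of_infRepSeminorm_lt hg (max_lt_iff.1 ht).1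
  obtain ⟨n₂, p₂, q₂, rfl, h₂⟩ := exists_eq_sum_of_infRepSeminorm_lt hg (max_lt_iff.1 ht).2
  have := infRepSeminorm_le_of_eq_sum (g := g) (wP := wP) (wQ := wQ)
    (Sum.elim p₁ p₂) (Sum.elim q₁ q₂) (Fintype.sum_sum_type _).symm
  rw [← Finset.univ_disjSum_univ, Finset.sup_disjSum] at this
  exact this.trans (sup_le h₁.le h₂.le)

theorem infRepSeminorm_sum_le (hg : IsSumGenerating g) {ι : Type*} (s : Finset ι) (u : ι → M) :
    infRepSeminorm g wP wQ (∑ i ∈ s, u i) ≤ s.sup fun i => infRepSeminorm g wP wQ (u i) := by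
  induction s using Finset.cons_induction with
  | empty => simp
  | cons a s ha ih =>
    rw [Finset.sum_cons, Finset.sup_cons]
    exact (infRepSeminorm_add_le hg _ _).trans (max_le_max le_rfl ih)

theorem infRepSeminorm_map_le {P' Q' M' : Type*} [AddCommMonoid M'] {g' : P' → Q' → M'}
    {wP' : P' → ℝ≥0} {wQ' : Q' → ℝ≥0} (φ : M →+ M') (fP : P → P') (fQ : Q → Q') (c : ℝ≥0)
    (hφ : ∀ p q, φ (g p q) = g' (fP p) (fQ q))
    (hw : ∀ p q, wP' (fP p) * wQ' (fQ q) ≤ c * (wP p * wQ q))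
    (hg : IsSumGenerating g) (x : M) :
    infRepSeminorm g' wP' wQ' (φ x) ≤ c * infRepSeminorm g wP wQ x := by
  obtain ⟨n, p, q, hx⟩ := hg x
  have hne : { r | ∃ (n : ℕ) (p : Fin n → P) (q : Fin n → Q), x = ∑ i, g (p i) (q i) ∧
      r = Finset.univ.sup fun i => wP (p i) * wQ (q i) }.Nonempty := ⟨_, n, p, q, hx, rfl⟩
  rw [show infRepSeminorm g wP wQ x = sInf _ from rfl,
    Monotone.map_csInf_of_continuousAt (f := (c * ·))
    (continuous_const.mul continuous_id).continuousAt (fun _ _ h => mul_le_mul_right h c) hne]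
  refine le_csInf (hne.image _) ?_
  rintro _ ⟨_, ⟨n, p, q, rfl, rfl⟩, rfl⟩
  refine (infRepSeminorm_le_of_eq_sum (fP ∘ p) (fQ ∘ q) (by simp [hφ])).trans ?_
  refine Finset.sup_le fun i _ => (hw _ _).trans ?_
  exact mul_le_mul_right (Finset.le_sup (f := fun i => wP (p i) * wQ (q i)) (Finset.mem_univ i)) c

end InfRepSeminorm

section KahlerSeminorm

variable {A B : Type*} [CommRing A] [CommRing B] [Algebra A B]

theorem kahlerSeminorm_eq_infRepSeminorm (vB : B → ℝ≥0) :
    kahlerSeminorm A B vB = infRepSeminorm (fun c b => c • KaehlerDifferential.D A B b) vB vB :=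
  rfl

theorem KaehlerDifferential.exists_eq_sum_smul_D (x : Ω[B⁄A]) :
    ∃ (n : ℕ) (c b : Fin n → B), x = ∑ i, c i • KaehlerDifferential.D A B (b i) := by
  have hx : x ∈ Submodule.span B (Set.range (KaehlerDifferential.D A B)) := by
    rw [KaehlerDifferential.span_range_derivation]; trivial
  obtain ⟨n, c, d, rfl⟩ := Submodule.mem_span_set'.1 hx
  choose b hb using fun i => (d i).2
  exact ⟨n, c, b, by simp [hb]⟩

theorem KaehlerDifferential.isSumGenerating_smul_D :
    IsSumGenerating fun (c b : B) => c • KaehlerDifferential.D A B b :=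
  KaehlerDifferential.exists_eq_sum_smul_D

theorem kahlerSeminorm_le_of_eq_sum (vB : B → ℝ≥0) {ι : Type*} [Fintype ι] (c b : ι → B)
    {x : Ω[B⁄A]} (hx : x = ∑ i, c i • KaehlerDifferential.D A B (b i)) :
    kahlerSeminorm A B vB x ≤ Finset.univ.sup fun i => vB (c i) * vB (b i) := by
  rw [kahlerSeminorm_eq_infRepSeminorm]
  exact infRepSeminorm_le_of_eq_sum c b hx

theorem kahlerSeminorm_sum_le (vB : B → ℝ≥0) {ι : Type*} (s : Finset ι) (u : ι → Ω[B⁄A]) :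
    kahlerSeminorm A B vB (∑ i ∈ s, u i) ≤ s.sup fun i => kahlerSeminorm A B vB (u i) := by
  rw [kahlerSeminorm_eq_infRepSeminorm]
  exact infRepSeminorm_sum_le KaehlerDifferential.isSumGenerating_smul_D s u

theorem exists_eq_sum_of_kahlerSeminorm_lt {vB : B → ℝ≥0} {x : Ω[B⁄A]} {t : ℝ≥0}
    (h : kahlerSeminorm A B vB x < t) :
    ∃ (n : ℕ) (c b : Fin n → B), x = ∑ i, c i • KaehlerDifferential.D A B (b i) ∧
      (Finset.univ.sup fun i => vB (c i) * vB (b i)) < t := by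
  rw [kahlerSeminorm_eq_infRepSeminorm] at h
  exact exists_eq_sum_of_infRepSeminorm_lt KaehlerDifferential.isSumGenerating_smul_D h

variable (v : Valuation B ℝ≥0)

theorem kahlerSeminorm_D_le (b : B) :
    kahlerSeminorm A B (v ·) (KaehlerDifferential.D A B b) ≤ v b := by
  rw [kahlerSeminorm_eq_infRepSeminorm]
  simpa using infRepSeminorm_apply_le (g := fun c b => c • KaehlerDifferential.D A B b)
    (wP := (v ·)) (wQ := (v ·)) 1 b

theorem kahlerSeminorm_smul_le (a : B) (x : Ω[B⁄A]) :
    kahlerSeminorm A B (v ·) (a • x) ≤ v a * kahlerSeminorm A B (v ·) x := by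
  rw [kahlerSeminorm_eq_infRepSeminorm]
  exact infRepSeminorm_map_le (DistribSMul.toAddMonoidHom _ a) (a * ·) id (v a)
    (fun c b => smul_smul a c _) (fun c b => by simp [mul_assoc])
    KaehlerDifferential.isSumGenerating_smul_D x

end KahlerSeminorm

theorem kahlerSeminorm_map_le {A K L : Type*} [CommRing A] [CommRing K] [CommRing L]
    [Algebra A K] [Algebra A L] [Algebra K L] [IsScalarTower A K L] (v : Valuation L ℝ≥0)
    (ω : Ω[K⁄A]) :
    kahlerSeminorm A L (v ·) (KaehlerDifferential.map A A K L ω)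
      ≤ kahlerSeminorm A K (v.comap (algebraMap K L) ·) ω := by
  simp only [kahlerSeminorm_eq_infRepSeminorm]
  simpa using infRepSeminorm_map_le (KaehlerDifferential.map A A K L).toAddMonoidHom
    (algebraMap K L) (algebraMap K L) 1 (fun c b => by simp [algebraMap_smul]) (fun c b => by simp)
    KaehlerDifferential.isSumGenerating_smul_D ω

section TensorSeminorm

variable {R M N : Type*} [CommRing R] [AddCommGroup M] [Module R M] [AddCommGroup N] [Module R N]
  (vM : M → ℝ≥0) (vN : N → ℝ≥0)

theorem tensorSeminorm_eq_infRepSeminorm :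
    tensorSeminorm R M N vM vN = infRepSeminorm (TensorProduct.tmul R) vM vN :=
  rfl

theorem TensorProduct.isSumGenerating_tmul :
    IsSumGenerating (TensorProduct.tmul R (M := M) (N := N)) :=
  TensorProduct.exists_sum_tmul_eq

theorem tensorSeminorm_le_of_eq_sum {ι : Type*} [Fintype ι] (m : ι → M) (n : ι → N)
    {x : M ⊗[R] N} (hx : x = ∑ i, m i ⊗ₜ[R] n i) :
    tensorSeminorm R M N vM vN x ≤ Finset.univ.sup fun i => vM (m i) * vN (n i) :=
  infRepSeminorm_le_of_eq_sum m n hx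

theorem tensorSeminorm_tmul_le (m : M) (n : N) :
    tensorSeminorm R M N vM vN (m ⊗ₜ n) ≤ vM m * vN n :=
  infRepSeminorm_apply_le m n

@[simp]
theorem tensorSeminorm_zero : tensorSeminorm R M N vM vN 0 = 0 :=
  infRepSeminorm_zero

theorem tensorSeminorm_add_le (x y : M ⊗[R] N) :
    tensorSeminorm R M N vM vN (x + y)
      ≤ max (tensorSeminorm R M N vM vN x) (tensorSeminorm R M N vM vN y) :=
  infRepSeminorm_add_le TensorProduct.isSumGenerating_tmul x y

theorem tensorSeminorm_le_of_forall_eq_sum {x : M ⊗[R] N} {b : ℝ≥0}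
    (h : ∀ (k : ℕ) (m : Fin k → M) (n : Fin k → N), x = ∑ i, m i ⊗ₜ[R] n i →
      b ≤ Finset.univ.sup fun i => vM (m i) * vN (n i)) :
    b ≤ tensorSeminorm R M N vM vN x :=
  le_infRepSeminorm TensorProduct.isSumGenerating_tmul h

theorem tensorSeminorm_comm_le (x : M ⊗[R] N) :
    tensorSeminorm R N M vN vM (TensorProduct.comm R M N x) ≤ tensorSeminorm R M N vM vN x := by
  refine tensorSeminorm_le_of_forall_eq_sum vM vN fun k m n hx => ?_
  refine (tensorSeminorm_le_of_eq_sum vN vM n m (by simp [hx])).trans_eq ?_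
  simp_rw [mul_comm]

theorem tensorSeminorm_comm (x : M ⊗[R] N) :
    tensorSeminorm R N M vN vM (TensorProduct.comm R M N x) = tensorSeminorm R M N vM vN x := by
  refine le_antisymm (tensorSeminorm_comm_le vM vN x) ?_
  simpa using tensorSeminorm_comm_le vN vM (TensorProduct.comm R M N x)

end TensorSeminorm

theorem tensorSeminorm_smul_le {R L N : Type*} [CommRing R] [CommRing L] [Algebra R L]
    [AddCommGroup N] [Module R N] (v : Valuation L ℝ≥0) (vN : N → ℝ≥0) (l : L) (x : L ⊗[R] N) :
    tensorSeminorm R L N (v ·) vN (l • x) ≤ v l * tensorSeminorm R L N (v ·) vN x :=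
  infRepSeminorm_map_le (DistribSMul.toAddMonoidHom _ l) (l * ·) id (v l)
    (fun a n => by simp [TensorProduct.smul_tmul']) (fun a n => by simp [mul_assoc])
    TensorProduct.isSumGenerating_tmul x

theorem Valuation.map_le_max_sub {R Γ₀ : Type*} [Ring R] [LinearOrderedCommMonoidWithZero Γ₀]
    (v : Valuation R Γ₀) (b y : R) : v y ≤ max (v b) (v (b - y)) := by
  simpa using v.map_sub b (b - y)

theorem NNReal.squeeze_zero {α : Type*} {l : Filter α} {f g : α → ℝ≥0} (hfg : ∀ a, f a ≤ g a)
    (hg : Tendsto g l (𝓝 0)) : Tendsto f l (𝓝 0) :=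
  tendsto_of_tendsto_of_tendsto_of_le_of_le tendsto_const_nhds hg (fun _ => bot_le) hfg

section NullSequences

variable {K L Q : Type*} [CommRing K] [CommRing L] [Algebra K L] [AddCommGroup Q] [Module K Q]
  (v : Valuation L ℝ≥0) (vQ : Q → ℝ≥0)

def nullSeqSubmodule : Submodule L (ℕ → L ⊗[K] Q) where
  carrier := {f | Tendsto (fun n => tensorSeminorm K L Q (v ·) vQ (f n)) atTop (𝓝 0)}
  add_mem' {f g} hf hg := NNReal.squeeze_zero (fun n => tensorSeminorm_add_le _ _ (f n) (g n))
    (by simpa using hf.max hg)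
  zero_mem' := by simp
  smul_mem' l f hf := NNReal.squeeze_zero (fun n => tensorSeminorm_smul_le v vQ l (f n))
    (by simpa using hf.const_mul (v l))

variable {v vQ} in
theorem nullSeqSubmodule_mkQ_eq_iff {f g : ℕ → L ⊗[K] Q} :
    (nullSeqSubmodule v vQ).mkQ f = (nullSeqSubmodule v vQ).mkQ g ↔
      Tendsto (fun n => tensorSeminorm K L Q (v ·) vQ (f n - g n)) atTop (𝓝 0) :=
  Submodule.Quotient.eq _

end NullSequences

section Approximation

variable {A K L : Type*} [CommRing A] [CommRing K] [CommRing L] [Algebra A K] [Algebra K L]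
  (v : Valuation L ℝ≥0)

def Approximates (x : ℕ → K) (b : L) : Prop :=
  Tendsto (fun n => v (b - algebraMap K L (x n))) atTop (𝓝 0)

theorem exists_approximates
    (hdense : ∀ (l : L) (ε : ℝ≥0), 0 < ε → ∃ x : K, v (l - algebraMap K L x) < ε) :
    ∃ app : L → ℕ → K, ∀ b, Approximates v (app b) b := by
  choose app happ using fun (b : L) (n : ℕ) => hdense b (1 / (n + 1)) (by positivity)
  exact ⟨app, fun b => NNReal.squeeze_zero (fun n => (happ b n).le)
    tendsto_one_div_add_atTop_nhds_zero_nat⟩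

variable {v}

theorem approximates_const (u : K) : Approximates v (fun _ => u) (algebraMap K L u) := by
  simp [Approximates]

theorem Approximates.tendsto_max {x : ℕ → K} {b : L} (hx : Approximates v x b) :
    Tendsto (fun n => max (v b) (v (b - algebraMap K L (x n)))) atTop (𝓝 (v b)) := by
  simpa using tendsto_const_nhds.max hx

theorem Approximates.tendsto_mul_val {x y : ℕ → K} {a b : L} (hx : Approximates v x a)
    (hy : Approximates v y b) :
    Tendsto (fun n => v (a - algebraMap K L (x n)) * v (algebraMap K L (y n))) atTop (𝓝 0) :=
  NNReal.squeeze_zero (fun n => mul_le_mul_right (v.map_le_max_sub b _) _)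
    (by simpa using hx.mul hy.tendsto_max)

theorem Approximates.add {x y : ℕ → K} {a b : L} (hx : Approximates v x a)
    (hy : Approximates v y b) : Approximates v (x + y) (a + b) := by
  refine NNReal.squeeze_zero (fun n => ?_) (by simpa using hx.max hy)
  rw [Pi.add_apply, map_add, add_sub_add_comm]
  exact v.map_add _ _

theorem Approximates.mul {x y : ℕ → K} {a b : L} (hx : Approximates v x a)
    (hy : Approximates v y b) : Approximates v (x * y) (a * b) := by
  refine NNReal.squeeze_zero (fun n => ?_)
    (by simpa using (hy.const_mul (v a)).max (hx.tendsto_mul_val hy))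
  have : a * b - algebraMap K L ((x * y) n)
      = a * (b - algebraMap K L (y n)) + (a - algebraMap K L (x n)) * algebraMap K L (y n) := by
    rw [Pi.mul_apply, map_mul]; ring
  rw [this, ← map_mul, ← map_mul]
  exact v.map_add _ _

variable (A v) in
noncomputable def seqClass (x : ℕ → K) :
    (ℕ → L ⊗[K] Ω[K⁄A]) ⧸ nullSeqSubmodule v (kahlerSeminorm A K (v.comap (algebraMap K L) ·)) :=
  Submodule.mkQ _ fun n => (1 : L) ⊗ₜ KaehlerDifferential.D A K (x n)

theorem seqClass_add (x y : ℕ → K) :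
    seqClass A v (x + y) = seqClass A v x + seqClass A v y := by
  simp only [seqClass, ← map_add]
  congr 1
  ext n
  simp [TensorProduct.tmul_add]

theorem seqClass_one : seqClass A v (1 : ℕ → K) = 0 := by
  simp only [seqClass, Pi.one_apply, Derivation.map_one_eq_zero, TensorProduct.tmul_zero]
  exact map_zero _

theorem seqClass_eq_of_approximates {x y : ℕ → K} {b : L} (hx : Approximates v x b)
    (hy : Approximates v y b) : seqClass A v x = seqClass A v y := by
  refine nullSeqSubmodule_mkQ_eq_iff.2
    (NNReal.squeeze_zero (fun n => ?_) (by simpa using hy.max hx))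
  rw [← TensorProduct.tmul_sub, ← map_sub]
  refine (tensorSeminorm_tmul_le _ _ _ _).trans ?_
  rw [map_one, one_mul]
  refine (kahlerSeminorm_D_le _ _).trans ?_
  have : algebraMap K L (x n - y n)
      = (b - algebraMap K L (y n)) - (b - algebraMap K L (x n)) := by
    rw [map_sub]; ring
  rw [Valuation.comap_apply, this]
  exact v.map_sub _ _

theorem seqClass_mul {x y : ℕ → K} {a b : L} (hx : Approximates v x a) (hy : Approximates v y b) :
    seqClass A v (x * y) = a • seqClass A v y + b • seqClass A v x := by
  simp only [seqClass, ← map_smul, ← map_add]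
  refine nullSeqSubmodule_mkQ_eq_iff.2 (NNReal.squeeze_zero (fun n => ?_)
    (by simpa using (hx.tendsto_mul_val hy).max (hy.tendsto_mul_val hx)))
  have hsplit : (1 : L) ⊗ₜ[K] KaehlerDifferential.D A K ((x * y) n)
      - (a • (1 : L) ⊗ₜ[K] KaehlerDifferential.D A K (y n)
        + b • (1 : L) ⊗ₜ[K] KaehlerDifferential.D A K (x n))
      = (algebraMap K L (x n) - a) ⊗ₜ KaehlerDifferential.D A K (y n)
        + (algebraMap K L (y n) - b) ⊗ₜ KaehlerDifferential.D A K (x n) := by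
    simp only [Pi.mul_apply, Derivation.leibniz, TensorProduct.tmul_add, TensorProduct.sub_tmul,
      TensorProduct.smul_tmul', smul_eq_mul, mul_one, ← TensorProduct.smul_tmul,
      Algebra.smul_def]
    abel
  rw [Pi.add_apply, Pi.smul_apply, Pi.smul_apply, hsplit]
  refine (tensorSeminorm_add_le _ _ _ _).trans (max_le_max ?_ ?_) <;>
  · refine (tensorSeminorm_tmul_le _ _ _ _).trans ?_
    rw [Valuation.map_sub_swap]
    exact mul_le_mul_right (kahlerSeminorm_D_le _ _) _

variable (A) in
theorem eventually_tensorSeminorm_sum_tmul_D_lt {ι : Type*} [Fintype ι] (c b : ι → L)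
    {x : ι → ℕ → K} (hx : ∀ i, Approximates v (x i) (b i)) {t : ℝ≥0}
    (ht : (Finset.univ.sup fun i => v (c i) * v (b i)) < t) :
    ∀ᶠ m in atTop,
      tensorSeminorm K L Ω[K⁄A] (v ·) (kahlerSeminorm A K (v.comap (algebraMap K L) ·))
        (∑ i, c i ⊗ₜ KaehlerDifferential.D A K (x i m)) < t := by
  have hlim : Tendsto (fun m => Finset.univ.sup fun i =>
      v (c i) * max (v (b i)) (v (b i - algebraMap K L (x i m)))) atTop
      (𝓝 (Finset.univ.sup fun i => v (c i) * v (b i))) :=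
    Tendsto.finset_sup_nhds_apply fun i _ => (hx i).tendsto_max.const_mul (v (c i))
  filter_upwards [hlim.eventually_lt_const ht] with m hm
  refine lt_of_le_of_lt ((tensorSeminorm_le_of_eq_sum _ _ _ _ rfl).trans
    (Finset.sup_mono_fun fun i _ => mul_le_mul_right ?_ _)) hm
  exact (kahlerSeminorm_D_le _ _).trans (v.map_le_max_sub (b i) _)

variable [Algebra A L] [IsScalarTower A K L]

theorem seqClass_algebraMap_mul (a : A) (x : ℕ → K) :
    seqClass A v (fun n => algebraMap A K a * x n) = a • seqClass A v x := by
  simp only [seqClass, Submodule.mkQ_apply, ← Submodule.Quotient.mk_smul]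
  congr 1
  ext n
  simp [← Algebra.smul_def, TensorProduct.tmul_smul]

end Approximation

section BaseChange

variable {A K L : Type*} [CommRing A] [CommRing K] [CommRing L] [Algebra A K] [Algebra K L]
  [Algebra A L] [IsScalarTower A K L] {v : Valuation L ℝ≥0}

variable (A) in
noncomputable def approxDerivation {app : L → ℕ → K} (happ : ∀ b, Approximates v (app b) b) :
    Derivation A L
      ((ℕ → L ⊗[K] Ω[K⁄A]) ⧸ nullSeqSubmodule v (kahlerSeminorm A K (v.comap (algebraMap K L) ·)))
    where
  toFun b := seqClass A v (app b)
  map_add' a b := by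
    rw [seqClass_eq_of_approximates (happ (a + b)) ((happ a).add (happ b)), seqClass_add]
  map_smul' a b := by
    have h := (approximates_const (v := v) (algebraMap A K a)).mul (happ b)
    rw [← IsScalarTower.algebraMap_apply, ← Algebra.smul_def] at h
    exact (seqClass_eq_of_approximates (happ (a • b)) h).trans (seqClass_algebraMap_mul a (app b))
  map_one_eq_zero' := by
    have h := approximates_const (v := v) (1 : K)
    rw [map_one] at h
    exact (seqClass_eq_of_approximates (happ 1) h).trans seqClass_one
  leibniz' a b :=
    (seqClass_eq_of_approximates (happ (a * b)) ((happ a).mul (happ b))).trans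
      (seqClass_mul (happ a) (happ b))

theorem approxDerivation_apply {app : L → ℕ → K} (happ : ∀ b, Approximates v (app b) b) (b : L) :
    approxDerivation A happ b = seqClass A v (app b) :=
  rfl

theorem approxDerivation_algebraMap {app : L → ℕ → K} (happ : ∀ b, Approximates v (app b) b)
    (u : K) :
    approxDerivation A happ (algebraMap K L u)
      = Submodule.mkQ _ fun _ => (1 : L) ⊗ₜ KaehlerDifferential.D A K u :=
  seqClass_eq_of_approximates (happ _) (approximates_const u)

theorem liftKaehlerDifferential_approxDerivation_mapBaseChange {app : L → ℕ → K}
    (happ : ∀ b, Approximates v (app b) b) (w : L ⊗[K] Ω[K⁄A]) :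
    (approxDerivation A happ).liftKaehlerDifferential (KaehlerDifferential.mapBaseChange A K L w)
      = Submodule.mkQ _ fun _ => w := by
  induction w using TensorProduct.induction_on with
  | zero => simp; rfl
  | tmul l ω =>
    obtain ⟨n, c, b, rfl⟩ := KaehlerDifferential.exists_eq_sum_smul_D ω
    simp only [KaehlerDifferential.mapBaseChange_tmul, map_sum, map_smul,
      KaehlerDifferential.map_D, Derivation.liftKaehlerDifferential_comp_D,
      LinearMap.map_smul_of_tower, approxDerivation_algebraMap]
    simp only [← LinearMap.map_smul_of_tower, ← map_sum, ← map_smul]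
    congr 1
    ext m
    simp [Finset.smul_sum, TensorProduct.tmul_sum, TensorProduct.tmul_smul,
      TensorProduct.smul_tmul']
  | add w w' hw hw' =>
    rw [map_add, map_add, hw, hw', ← map_add]
    rfl

theorem kahlerSeminorm_mapBaseChange_le (w : L ⊗[K] Ω[K⁄A]) :
    kahlerSeminorm A L (v ·) (KaehlerDifferential.mapBaseChange A K L w)
      ≤ tensorSeminorm K L Ω[K⁄A] (v ·) (kahlerSeminorm A K (v.comap (algebraMap K L) ·)) w := by
  refine tensorSeminorm_le_of_forall_eq_sum _ _ fun n l ω hw => ?_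
  rw [hw, map_sum]
  refine (kahlerSeminorm_sum_le _ _ _).trans (Finset.sup_mono_fun fun i _ => ?_)
  rw [KaehlerDifferential.mapBaseChange_tmul]
  exact (kahlerSeminorm_smul_le v _ _).trans (mul_le_mul_right (kahlerSeminorm_map_le v _) _)

theorem mkQ_const_eq_mkQ_sum_of_mapBaseChange_eq {app : L → ℕ → K}
    (happ : ∀ b, Approximates v (app b) b) {w : L ⊗[K] Ω[K⁄A]} {n : ℕ} {c b : Fin n → L}
    (hw : KaehlerDifferential.mapBaseChange A K L w = ∑ i, c i • KaehlerDifferential.D A L (b i)) :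
    (nullSeqSubmodule v (kahlerSeminorm A K (v.comap (algebraMap K L) ·))).mkQ (fun _ => w)
      = Submodule.mkQ _ fun m => ∑ i, c i ⊗ₜ KaehlerDifferential.D A K (app (b i) m) := by
  rw [← liftKaehlerDifferential_approxDerivation_mapBaseChange happ w, hw]
  simp only [map_sum, map_smul, Derivation.liftKaehlerDifferential_comp_D,
    approxDerivation_apply, seqClass]
  simp only [← map_smul, ← map_sum]
  congr 1
  ext m
  simp [Finset.sum_apply, TensorProduct.smul_tmul']

theorem tensorSeminorm_le_kahlerSeminorm_mapBaseChange
    (hdense : ∀ (l : L) (ε : ℝ≥0), 0 < ε → ∃ x : K, v (l - algebraMap K L x) < ε)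
    (w : L ⊗[K] Ω[K⁄A]) :
    tensorSeminorm K L Ω[K⁄A] (v ·) (kahlerSeminorm A K (v.comap (algebraMap K L) ·)) w
      ≤ kahlerSeminorm A L (v ·) (KaehlerDifferential.mapBaseChange A K L w) := by
  obtain ⟨app, happ⟩ := exists_approximates v hdense
  refine le_of_forall_gt_imp_ge_of_dense fun t ht => ?_
  obtain ⟨n, c, b, hw, hlt⟩ := exists_eq_sum_of_kahlerSeminorm_lt ht
  have hnull := nullSeqSubmodule_mkQ_eq_iff.1 (mkQ_const_eq_mkQ_sum_of_mapBaseChange_eq happ hw)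
  obtain ⟨m, hm₁, hm₂⟩ := ((hnull.eventually_lt_const (zero_le.trans_lt ht)).and
    (eventually_tensorSeminorm_sum_tmul_D_lt A c b (fun i => happ (b i)) hlt)).exists
  rw [← sub_add_cancel w (∑ i, c i ⊗ₜ KaehlerDifferential.D A K (app (b i) m))]
  exact (tensorSeminorm_add_le _ _ _ _).trans (max_le hm₁.le hm₂.le)

theorem kahlerSeminorm_mapBaseChange
    (hdense : ∀ (l : L) (ε : ℝ≥0), 0 < ε → ∃ x : K, v (l - algebraMap K L x) < ε)
    (w : L ⊗[K] Ω[K⁄A]) :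
    kahlerSeminorm A L (v ·) (KaehlerDifferential.mapBaseChange A K L w)
      = tensorSeminorm K L Ω[K⁄A] (v ·) (kahlerSeminorm A K (v.comap (algebraMap K L) ·)) w :=
  le_antisymm (kahlerSeminorm_mapBaseChange_le w)
    (tensorSeminorm_le_kahlerSeminorm_mapBaseChange hdense w)

theorem exists_kahlerSeminorm_sub_mapBaseChange_lt
    (hdense : ∀ (l : L) (ε : ℝ≥0), 0 < ε → ∃ x : K, v (l - algebraMap K L x) < ε)
    (y : Ω[L⁄A]) {ε : ℝ≥0} (hε : 0 < ε) :
    ∃ w : L ⊗[K] Ω[K⁄A],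
      kahlerSeminorm A L (v ·) (y - KaehlerDifferential.mapBaseChange A K L w) < ε := by
  obtain ⟨app, happ⟩ := exists_approximates v hdense
  obtain ⟨n, c, b, rfl⟩ := KaehlerDifferential.exists_eq_sum_smul_D y
  have hlim : Tendsto (fun m => Finset.univ.sup fun i =>
      v (c i) * v (b i - algebraMap K L (app (b i) m))) atTop (𝓝 0) := by
    convert Tendsto.finset_sup_nhds_apply (s := Finset.univ) fun i _ =>
      (happ (b i)).const_mul (v (c i))
    simp only [mul_zero]
    exact (Finset.sup_bot _).symm
  obtain ⟨m, hm⟩ := (hlim.eventually_lt_const hε).exists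
  refine ⟨∑ i, c i ⊗ₜ KaehlerDifferential.D A K (app (b i) m), lt_of_le_of_lt ?_ hm⟩
  refine kahlerSeminorm_le_of_eq_sum _ c (fun i => b i - algebraMap K L (app (b i) m)) ?_
  simp [map_sum, ← Finset.sum_sub_distrib, smul_sub]

end BaseChange

/-- If `L/K` is an extension of real-valued fields (valuations with values in `ℝ≥0`) with `K`
dense in `L`, and `A → K` is a ring homomorphism, then the canonical map
`ψ : Ω_{K/A} ⊗_K L → Ω_{L/A}` (characterized by `ψ(ω ⊗ l) = l • (map ω)`) is an isometry for the
tensor seminorm (of the Kähler seminorm on `Ω_{K/A}` and the absolute value of `L`) on the source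
and the Kähler seminorm on the target, and has dense image. -/
theorem kahler_seminorm_dense_extension_isometry_dense_image
    {A K L : Type*} [CommRing A] [Field K] [Field L]
    [Algebra A K] [Algebra A L] [Algebra K L] [IsScalarTower A K L]
    (vK : Valuation K ℝ≥0) (vL : Valuation L ℝ≥0)
    (hext : ∀ x : K, vL (algebraMap K L x) = vK x)
    (hdense : ∀ (l : L) (ε : ℝ≥0), 0 < ε → ∃ x : K, vL (l - algebraMap K L x) < ε)
    (ψ : TensorProduct K (Ω[K⁄A]) L →ₗ[K] Ω[L⁄A])
    (hψ : ∀ (ω : Ω[K⁄A]) (l : L), ψ (ω ⊗ₜ l) = l • (KaehlerDifferential.map A A K L ω)) :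
    (∀ x, kahlerSeminorm A L (vL ·) (ψ x)
        = tensorSeminorm K (Ω[K⁄A]) L (kahlerSeminorm A K (vK ·)) (vL ·) x) ∧
    (∀ (y : Ω[L⁄A]) (ε : ℝ≥0), 0 < ε →
        ∃ x, kahlerSeminorm A L (vL ·) (y - ψ x) < ε) := by
  obtain rfl : vK = vL.comap (algebraMap K L) := Valuation.ext fun x => (hext x).symm
  have hψ_eq : ∀ z, ψ z = KaehlerDifferential.mapBaseChange A K L (TensorProduct.comm K _ _ z) := by
    intro z
    induction z using TensorProduct.induction_on with
    | zero => simp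
    | tmul ω l => simp [hψ]
    | add z z' hz hz' => simp [hz, hz']
  refine ⟨fun z => ?_, fun y ε hε => ?_⟩
  · rw [hψ_eq, kahlerSeminorm_mapBaseChange hdense, tensorSeminorm_comm]
  · obtain ⟨w, hw⟩ := exists_kahlerSeminorm_sub_mapBaseChange_lt hdense y hε
    exact ⟨(TensorProduct.comm K _ _).symm w, by rwa [hψ_eq, LinearEquiv.apply_symm_apply]⟩
end

section
/- Let f : A → B be a non-expansive homomorphism of seminormed commutative rings, let I be the kernel of the multiplication map B ⊗_A B → B, where B ⊗_A B carries the tensor seminorm, I carries the restricted seminorm, and I/I² carries the quotient seminorm. Then the classical isomorphism Ω_{B/A} ≅ I/I², determined by d(b) ↦ b⊗1 − 1⊗b, is an isometry when Ω_{B/A} is given the Kähler seminorm. -/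
open scoped NNReal TensorProduct

/-- A (nonarchimedean) seminorm on an additive group. -/
def IsGroupSeminorm {M : Type*} [AddCommGroup M] (f : M → ℝ≥0) : Prop :=
  f 0 = 0 ∧ ∀ x y : M, f (x - y) ≤ max (f x) (f y)

/-- A seminorm on a commutative ring. -/
def IsRingSeminorm {A : Type*} [CommRing A] (f : A → ℝ≥0) : Prop :=
  IsGroupSeminorm f ∧ f 1 = 1 ∧ ∀ x y : A, f (x * y) ≤ f x * f y

/-- The quotient seminorm induced by a (surjective) map `f : M → N` from a seminorm on `M`. -/
noncomputable def quotientSeminorm {M N : Type*} (f : M → N) (v : M → ℝ≥0) (y : N) : ℝ≥0 :=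
  sInf { r | ∃ x : M, f x = y ∧ r = v x }

lemma IsGroupSeminorm.neg_eq {M : Type*} [AddCommGroup M] {f : M → ℝ≥0}
    (hf : IsGroupSeminorm f) (x : M) : f (-x) = f x := by
  have h : ∀ y : M, f (-y) ≤ f y := fun y => by
    simpa [hf.1] using hf.2 0 y
  exact le_antisymm (h x) (by simpa using h (-x))

lemma exists_tensor_rep {A M N : Type*} [CommRing A] [AddCommGroup M] [Module A M]
    [AddCommGroup N] [Module A N] (x : TensorProduct A M N) :
    ∃ (n : ℕ) (m : Fin n → M) (w : Fin n → N), x = ∑ i, m i ⊗ₜ[A] w i := by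
  induction x using TensorProduct.induction_on with
  | zero => exact ⟨0, ![], ![], by simp⟩
  | tmul a b => exact ⟨1, ![a], ![b], by simp⟩
  | add x y hx hy =>
      obtain ⟨n, m, w, rfl⟩ := hx
      obtain ⟨n', m', w', rfl⟩ := hy
      exact ⟨n + n', Fin.addCases m m', Fin.addCases w w', by
        rw [Fin.sum_univ_add]; simp⟩

lemma exists_kahler_rep {A B : Type*} [CommRing A] [CommRing B] [Algebra A B] (x : Ω[B⁄A]) :
    ∃ (n : ℕ) (c b : Fin n → B), x = ∑ i, c i • KaehlerDifferential.D A B (b i) := by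
  have hx : x ∈ Submodule.span B (Set.range (KaehlerDifferential.D A B)) := by
    rw [KaehlerDifferential.span_range_derivation]; trivial
  induction hx using Submodule.span_induction with
  | mem y hy =>
      obtain ⟨b, rfl⟩ := hy
      exact ⟨1, ![1], ![b], by simp⟩
  | zero => exact ⟨0, ![], ![], by simp⟩
  | add y z _ _ hy hz =>
      obtain ⟨n, c, b, rfl⟩ := hy
      obtain ⟨n', c', b', rfl⟩ := hz
      exact ⟨n + n', Fin.addCases c c', Fin.addCases b b', by
        rw [Fin.sum_univ_add]; simp⟩
  | smul a y _ hy =>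
      obtain ⟨n, c, b, rfl⟩ := hy
      exact ⟨n, fun i => a * c i, b, by rw [Finset.smul_sum]; simp [mul_smul]⟩

/-- For a non-expansive homomorphism `A → B` of seminormed rings, the classical isomorphism
`Ω_{B/A} ≅ I/I²`, where `I = ker(B ⊗_A B → B)`, determined by `d b ↦ b ⊗ 1 - 1 ⊗ b` (so
`c • d b ↦ [(c ⊗ 1) * (b ⊗ 1 - 1 ⊗ b)]`), is an isometry: the Kähler seminorm on `Ω_{B/A}`
corresponds to the quotient seminorm on `I/I²` of the seminorm on `I` restricted from the tensor
seminorm of `B ⊗_A B`. -/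
theorem kahlerSeminorm_eq_cotangent_quotient_seminorm
    {A B : Type*} [CommRing A] [CommRing B] [Algebra A B]
    (vA : A → ℝ≥0) (vB : B → ℝ≥0)
    (hA : IsRingSeminorm vA) (hB : IsRingSeminorm vB)
    (hnonexp : ∀ a : A, vB (algebraMap A B a) ≤ vA a)
    (I : Ideal (TensorProduct A B B))
    (hI : I = RingHom.ker (Algebra.TensorProduct.lmul' A : TensorProduct A B B →ₐ[A] B))
    (e : Ω[B⁄A] ≃+ I.Cotangent)
    (he : ∀ (c b : B) (h : (c ⊗ₜ[A] (1 : B)) * (b ⊗ₜ[A] (1 : B) - (1 : B) ⊗ₜ[A] b) ∈ I),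
      e (c • KaehlerDifferential.D A B b) = I.toCotangent ⟨_, h⟩) :
    ∀ x : Ω[B⁄A],
      kahlerSeminorm A B vB x
        = quotientSeminorm I.toCotangent
            (fun y : I => tensorSeminorm A B B vB vB ↑y) (e x) := by
  have memI : ∀ c b : B,
      (c ⊗ₜ[A] (1 : B)) * (b ⊗ₜ[A] (1 : B) - (1 : B) ⊗ₜ[A] b) ∈ I := by
    intro c b
    rw [hI, RingHom.mem_ker]
    simp [map_mul, map_sub]
  intro x
  apply le_antisymm
  · -- kahler ≤ quotient
    have hne : {r | ∃ y : I, I.toCotangent y = e x ∧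
        r = tensorSeminorm A B B vB vB ↑y}.Nonempty := by
      obtain ⟨y, hy⟩ := Ideal.toCotangent_surjective I (e x)
      exact ⟨_, y, hy, rfl⟩
    refine le_csInf hne ?_
    rintro r ⟨y, hy, rfl⟩
    have hyI : Algebra.TensorProduct.lmul' A (S := B) (y : TensorProduct A B B) = 0 := by
      have hz : (y : TensorProduct A B B) ∈
          RingHom.ker (Algebra.TensorProduct.lmul' A : TensorProduct A B B →ₐ[A] B) := by
        rw [← hI]; exact y.2
      rwa [RingHom.mem_ker] at hz
    refine le_csInf ?_ ?_
    · obtain ⟨n, m, w, hrep⟩ := exists_tensor_rep (A := A) (y : TensorProduct A B B)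
      exact ⟨_, n, m, w, hrep, rfl⟩
    rintro r ⟨n, m, w, hrep, rfl⟩
    have hsum0 : ∑ i, m i * w i = 0 := by
      have := congrArg (Algebra.TensorProduct.lmul' A (S := B)) hrep
      rw [hyI, map_sum] at this
      simpa using this.symm
    have key : x = ∑ i, (-(m i)) • KaehlerDifferential.D A B (w i) := by
      apply e.injective
      rw [map_sum]
      have hterm : ∀ i : Fin n, e ((-(m i)) • KaehlerDifferential.D A B (w i)) =
          I.toCotangent ⟨_, memI (-(m i)) (w i)⟩ := fun i => he _ _ _
      rw [Finset.sum_congr rfl (fun i _ => hterm i), ← map_sum, ← hy]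
      congr 1
      ext
      push_cast
      rw [hrep]
      have hterm2 : ∀ i : Fin n,
          ((-(m i)) ⊗ₜ[A] (1 : B)) * ((w i) ⊗ₜ[A] (1 : B) - (1 : B) ⊗ₜ[A] (w i))
            = (-(m i * w i)) ⊗ₜ[A] (1 : B) + (m i) ⊗ₜ[A] (w i) := by
        intro i
        simp [mul_sub, mul_add, Algebra.TensorProduct.tmul_mul_tmul, sub_eq_add_neg,
          TensorProduct.neg_tmul, neg_mul, mul_neg_one, mul_one, one_mul, neg_add_rev,
          add_comm]
      rw [Finset.sum_congr rfl (fun i _ => hterm2 i), Finset.sum_add_distrib,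
        ← TensorProduct.sum_tmul]
      simp [hsum0]
    refine le_trans (csInf_le (OrderBot.bddBelow _)
      ⟨n, fun i => -(m i), w, key, rfl⟩) ?_
    refine le_of_eq (Finset.sup_congr rfl fun i _ => ?_)
    rw [hB.1.neg_eq]
  · -- quotient ≤ kahler
    refine le_csInf ?_ ?_
    · obtain ⟨n, c, b, hrep⟩ := exists_kahler_rep x
      exact ⟨_, n, c, b, hrep, rfl⟩
    rintro r ⟨n, c, b, hrep, rfl⟩
    set y : I := ⟨∑ i, (c i ⊗ₜ[A] (1 : B)) * (b i ⊗ₜ[A] (1 : B) - (1 : B) ⊗ₜ[A] b i),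
      Submodule.sum_mem _ fun i _ => memI (c i) (b i)⟩ with hydef
    have hy : I.toCotangent y = e x := by
      rw [hrep, map_sum, Finset.sum_congr rfl (fun i _ => he (c i) (b i) (memI _ _)),
        ← map_sum]
      congr 1
      ext
      push_cast
      rfl
    refine le_trans (csInf_le (OrderBot.bddBelow _) ⟨y, hy, rfl⟩) ?_
    refine le_trans (csInf_le (OrderBot.bddBelow _)
      ⟨n + n, Fin.addCases (fun i => c i * b i) (fun i => -(c i)),
        Fin.addCases (fun _ => (1 : B)) b, ?_, rfl⟩) ?_
    · show (y : TensorProduct A B B) = _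
      rw [Fin.sum_univ_add]
      simp only [Fin.addCases_left, Fin.addCases_right, hydef]
      rw [Finset.sum_congr rfl (fun (i : Fin n) _ => by
        simp [mul_sub, mul_add, Algebra.TensorProduct.tmul_mul_tmul, sub_eq_add_neg,
          TensorProduct.neg_tmul, neg_mul, mul_neg_one, mul_one, one_mul] : ∀ i ∈ Finset.univ,
          (c i ⊗ₜ[A] (1:B)) * (b i ⊗ₜ[A] (1:B) - (1:B) ⊗ₜ[A] b i)
            = (c i * b i) ⊗ₜ[A] (1:B) + (-(c i)) ⊗ₜ[A] (b i))]
      rw [Finset.sum_add_distrib]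
    · refine Finset.sup_le fun j _ => ?_
      refine Fin.addCases ?_ ?_ j
      · intro i
        simp only [Fin.addCases_left]
        calc vB (c i * b i) * vB 1 = vB (c i * b i) := by rw [hB.2.1, mul_one]
          _ ≤ vB (c i) * vB (b i) := hB.2.2 _ _
          _ ≤ _ := Finset.le_sup (f := fun i => vB (c i) * vB (b i)) (Finset.mem_univ i)
      · intro i
        simp only [Fin.addCases_right, hB.1.neg_eq]
        exact Finset.le_sup (f := fun i => vB (c i) * vB (b i)) (Finset.mem_univ i)
end

section
/- Let A → B₀ → B be non-expansive homomorphisms of seminormed commutative rings such that the image of B₀ → B is dense in B. Then the image of the canonical homomorphism Ω_{B₀/A} ⊗_{B₀} B → Ω_{B/A} is dense in Ω_{B/A} with respect to the Kähler seminorm: for every x ∈ Ω_{B/A} and every ε > 0 there is an element y in the image with ‖x − y‖_Ω < ε. -/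
open scoped NNReal TensorProduct

/-! Write `x = ∑ cᵢ • d bᵢ`. Splitting
`cᵢ • d bᵢ - eᵢ • d aᵢ = cᵢ • d (bᵢ - aᵢ) + (cᵢ - eᵢ) • d aᵢ`, it suffices to choose `aᵢ ∈ B₀`
so close to `bᵢ` that `|cᵢ| |bᵢ - aᵢ| < ε`, and then `eᵢ ∈ B₀` so close to `cᵢ` that
`|cᵢ - eᵢ| |aᵢ| < ε`. -/

open KaehlerDifferential

theorem exists_mul_sub_lt_of_dense {X Y : Type*} [Sub Y] (v : Y → ℝ≥0) (f : X → Y)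
    (hdense : ∀ (y : Y) (ε : ℝ≥0), 0 < ε → ∃ x, v (y - f x) < ε)
    (r : ℝ≥0) (y : Y) {ε : ℝ≥0} (hε : 0 < ε) : ∃ x, r * v (y - f x) < ε := by
  obtain ⟨x, hx⟩ := hdense y (ε / (r + 1)) (by positivity)
  refine ⟨x, ?_⟩
  calc r * v (y - f x) ≤ v (y - f x) * (r + 1) := by rw [mul_comm]; gcongr; exact le_self_add
    _ < ε := NNReal.mul_lt_of_lt_div hx

section

variable {A B : Type*} [CommRing A] [CommRing B] [Algebra A B]

theorem KaehlerDifferential.exists_fin_sum_smul_D (x : Ω[B⁄A]) :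
    ∃ (n : ℕ) (c b : Fin n → B), x = ∑ i, c i • D A B (b i) := by
  have hx : x ∈ Submodule.span B (Set.range (D A B)) := by
    rw [span_range_derivation]; trivial
  obtain ⟨n, c, g, hg⟩ := Submodule.mem_span_set'.mp hx
  choose b hb using fun i => (g i).2
  exact ⟨n, c, b, by simp only [hb, hg]⟩

theorem KaehlerDifferential.smul_D_sub_smul_D (c e b a : B) :
    c • D A B b - e • D A B a = c • D A B (b - a) + (c - e) • D A B a := by
  rw [map_sub, smul_sub, sub_smul]
  abel

theorem kahlerSeminorm_lt_of_eq_sum (v : B → ℝ≥0) {ι : Type*} [Fintype ι] {x : Ω[B⁄A]}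
    {ε : ℝ≥0} (hε : 0 < ε) (c b : ι → B) (hx : x = ∑ i, c i • D A B (b i))
    (h : ∀ i, v (c i) * v (b i) < ε) : kahlerSeminorm A B v x < ε := by
  let e := Fintype.equivFin ι
  refine lt_of_le_of_lt (csInf_le (OrderBot.bddBelow _)
    ⟨_, c ∘ e.symm, b ∘ e.symm, hx ▸ (e.symm.sum_comp fun i => c i • D A B (b i)).symm, rfl⟩) ?_
  exact (Finset.sup_lt_iff hε).2 fun j _ => h _

end

theorem kahlerSeminorm_denseRange_of_denseRange_general
    {A B₀ B : Type*} [CommRing A] [CommRing B₀] [CommRing B]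
    [Algebra A B₀] [Algebra A B] [Algebra B₀ B]
    (vB : B → ℝ≥0)
    (hdense : ∀ (b : B) (ε : ℝ≥0), 0 < ε → ∃ a : B₀, vB (b - algebraMap B₀ B a) < ε)
    (Φ : TensorProduct B₀ (Ω[B₀⁄A]) B →+ Ω[B⁄A])
    (hΦ : ∀ (c b₀ : B₀) (b : B),
      Φ ((c • KaehlerDifferential.D A B₀ b₀) ⊗ₜ[B₀] b)
        = (b * algebraMap B₀ B c) • KaehlerDifferential.D A B (algebraMap B₀ B b₀)) :
    ∀ (x : Ω[B⁄A]) (ε : ℝ≥0), 0 < ε →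
      ∃ z, kahlerSeminorm A B vB (x - Φ z) < ε := by
  intro x ε hε
  obtain ⟨n, c, b, rfl⟩ := exists_fin_sum_smul_D x
  let φ := algebraMap B₀ B
  choose a ha using fun i => exists_mul_sub_lt_of_dense vB φ hdense (vB (c i)) (b i) hε
  choose e he using fun i => exists_mul_sub_lt_of_dense vB φ hdense (vB (φ (a i))) (c i) hε
  refine ⟨∑ i, (e i • D A B₀ (a i)) ⊗ₜ[B₀] (1 : B), kahlerSeminorm_lt_of_eq_sum vB hε
    (Sum.elim c fun i => c i - φ (e i)) (Sum.elim (fun i => b i - φ (a i)) fun i => φ (a i))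
    ?_ ?_⟩
  · simp only [map_sum, hΦ, one_mul, Fintype.sum_sum_type, Sum.elim_inl, Sum.elim_inr,
      ← Finset.sum_sub_distrib, ← Finset.sum_add_distrib, smul_D_sub_smul_D, φ]
  · rintro (i | i)
    · exact ha i
    · exact (mul_comm _ _).trans_lt (he i)

/-- Given non-expansive homomorphisms `A → B₀ → B` of seminormed rings with the image of
`B₀ → B` dense in `B`, the image of the canonical homomorphism
`Ω_{B₀/A} ⊗_{B₀} B → Ω_{B/A}` (characterized by `(c • d b₀) ⊗ b ↦ (b * c) • d b₀` in `Ω_{B/A}`)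
is dense in `Ω_{B/A}` for the Kähler seminorm. -/
theorem kahlerSeminorm_denseRange_of_denseRange
    {A B₀ B : Type*} [CommRing A] [CommRing B₀] [CommRing B]
    [Algebra A B₀] [Algebra A B] [Algebra B₀ B] [IsScalarTower A B₀ B]
    (vA : A → ℝ≥0) (vB₀ : B₀ → ℝ≥0) (vB : B → ℝ≥0)
    (hA : IsRingSeminorm vA) (hB₀ : IsRingSeminorm vB₀) (hB : IsRingSeminorm vB)
    (hAB₀ : ∀ a : A, vB₀ (algebraMap A B₀ a) ≤ vA a)
    (hB₀B : ∀ a : B₀, vB (algebraMap B₀ B a) ≤ vB₀ a)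
    (hdense : ∀ (b : B) (ε : ℝ≥0), 0 < ε → ∃ a : B₀, vB (b - algebraMap B₀ B a) < ε)
    (Φ : TensorProduct B₀ (Ω[B₀⁄A]) B →+ Ω[B⁄A])
    (hΦ : ∀ (c b₀ : B₀) (b : B),
      Φ ((c • KaehlerDifferential.D A B₀ b₀) ⊗ₜ[B₀] b)
        = (b * algebraMap B₀ B c) • KaehlerDifferential.D A B (algebraMap B₀ B b₀)) :
    ∀ (x : Ω[B⁄A]) (ε : ℝ≥0), 0 < ε →
      ∃ z, kahlerSeminorm A B vB (x - Φ z) < ε :=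
  kahlerSeminorm_denseRange_of_denseRange_general vB hdense Φ hΦ
end

section
/- Let K be a real-valued field and let M be a K°-module which is the union of a directed (filtered) family of submodules M_i. Then cont(M) = inf_i cont(M_i). -/
/-!
A finitely presented subquotient `N₁/N₂` of `M` is finitely generated, and `⊤` is a compact
element of its submodule lattice. The images of `N₁ ∩ Mᵢ` form a directed family of submodules
of `N₁/N₂` covering it, so one of them is everything: `N₁/N₂` is then a quotient of `N₁ ∩ Mₖ`,
hence a subquotient of `Mₖ`. Every value in the infimum defining `cont(M)` is therefore already
attained in some `cont(Mₖ)`; the reverse inequality holds because subquotients of a submodule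
are subquotients of `M`.
-/

open scoped NNReal

/-- The content of a module `M` over a ring `R` equipped with an absolute value `v`:
the infimum, over all finitely presented subquotients of `M` decomposed as
`⊕ᵢ R/πᵢR`, of `∏ᵢ v πᵢ`. -/
noncomputable def content (R : Type*) [CommRing R] (v : R → ℝ≥0)
    (M : Type*) [AddCommGroup M] [Module R M] : ℝ≥0 :=
  sInf { r | ∃ (N₁ : Submodule R M) (N₂ : Submodule R ↥N₁) (n : ℕ) (π : Fin n → R),
    Nonempty ((↥N₁ ⧸ N₂) ≃ₗ[R] ((i : Fin n) → R ⧸ Ideal.span {π i})) ∧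
    r = ∏ i, v (π i) }

namespace Submodule

variable {R M : Type*} [CommRing R] [AddCommGroup M] [Module R M]

theorem exists_subquotient_equiv_of_map_mkQ_comap_eq_top {P N₁ : Submodule R M}
    {N₂ : Submodule R N₁} (h : (P.comap N₁.subtype).map N₂.mkQ = ⊤) :
    ∃ (P₁ : Submodule R P) (P₂ : Submodule R P₁), Nonempty ((P₁ ⧸ P₂) ≃ₗ[R] (N₁ ⧸ N₂)) := by
  let P₁ : Submodule R P := N₁.comap P.subtype
  let φ : P₁ →ₗ[R] N₁ ⧸ N₂ :=
    N₂.mkQ ∘ₗ (P.subtype ∘ₗ P₁.subtype).codRestrict N₁ fun x => x.2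
  have hφ : Function.Surjective φ := by
    intro q
    obtain ⟨y, hyP, rfl⟩ := (mem_map.mp (h ▸ mem_top : q ∈ _))
    exact ⟨⟨⟨y, hyP⟩, y.2⟩, rfl⟩
  exact ⟨P₁, LinearMap.ker φ, ⟨φ.quotKerEquivOfSurjective hφ⟩⟩

theorem exists_map_mkQ_comap_eq_top_of_directed {ι : Type*} {N : ι → Submodule R M}
    (hdir : Directed (· ≤ ·) N) (hunion : ∀ x : M, ∃ i, x ∈ N i) {N₁ : Submodule R M}
    (N₂ : Submodule R N₁) [Module.Finite R (N₁ ⧸ N₂)] :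
    ∃ k, ((N k).comap N₁.subtype).map N₂.mkQ = ⊤ := by
  let S : ι → Submodule R (N₁ ⧸ N₂) := fun i => ((N i).comap N₁.subtype).map N₂.mkQ
  have hS : Directed (· ≤ ·) S :=
    hdir.mono_comp _ fun _ _ hij => map_mono (comap_mono hij)
  have hcover : ⊤ ≤ sSup (Set.range S) := by
    rintro q -
    obtain ⟨y, rfl⟩ := N₂.mkQ_surjective q
    obtain ⟨i, hi⟩ := hunion y
    rw [sSup_range]
    exact mem_iSup_of_mem i (mem_map_of_mem (p := (N i).comap N₁.subtype) hi)
  have hcompact : IsCompactElement (⊤ : Submodule R (N₁ ⧸ N₂)) :=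
    (fg_iff_compact _).mp Module.Finite.fg_top
  obtain ⟨i₀, -⟩ := hunion 0
  obtain ⟨-, ⟨k, rfl⟩, hk⟩ :=
    (CompleteLattice.isCompactElement_iff_le_of_directed_sSup_le _ _).mp hcompact _
      (Set.range_nonempty_iff_nonempty.mpr ⟨i₀⟩) hS.directedOn_range hcover
  exact ⟨k, top_le_iff.mp hk⟩

end Submodule

section Content

variable {R : Type*} [CommRing R] (v : R → ℝ≥0) {M : Type*} [AddCommGroup M] [Module R M]

variable (R M) in
def contentSet : Set ℝ≥0 :=
  { r | ∃ (N₁ : Submodule R M) (N₂ : Submodule R ↥N₁) (n : ℕ) (π : Fin n → R),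
    Nonempty ((↥N₁ ⧸ N₂) ≃ₗ[R] ((i : Fin n) → R ⧸ Ideal.span {π i})) ∧
    r = ∏ i, v (π i) }

theorem one_mem_contentSet : (1 : ℝ≥0) ∈ contentSet R v M :=
  ⟨⊥, ⊤, 0, ![], ⟨LinearEquiv.ofSubsingleton _ _⟩, by simp⟩

theorem contentSet_submodule_subset (P : Submodule R M) :
    contentSet R v P ⊆ contentSet R v M := by
  rintro r ⟨N₁, N₂, n, π, ⟨f⟩, rfl⟩
  let e := Submodule.equivMapOfInjective P.subtype P.injective_subtype N₁
  exact ⟨N₁.map P.subtype, N₂.map e.toLinearMap, n, π,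
    ⟨(Submodule.Quotient.equiv N₂ _ e rfl).symm.trans f⟩, rfl⟩

theorem content_le_content_submodule (P : Submodule R M) : content R v M ≤ content R v P :=
  csInf_le_csInf (OrderBot.bddBelow _) ⟨1, one_mem_contentSet v⟩
    (contentSet_submodule_subset v P)

theorem exists_mem_contentSet_of_directed {ι : Type*} {N : ι → Submodule R M}
    (hdir : Directed (· ≤ ·) N) (hunion : ∀ x : M, ∃ i, x ∈ N i) {r : ℝ≥0}
    (hr : r ∈ contentSet R v M) : ∃ k, r ∈ contentSet R v (N k) := by
  obtain ⟨N₁, N₂, n, π, ⟨e⟩, rfl⟩ := hr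
  have : Module.Finite R (N₁ ⧸ N₂) := Module.Finite.equiv e.symm
  obtain ⟨k, hk⟩ := Submodule.exists_map_mkQ_comap_eq_top_of_directed hdir hunion N₂
  obtain ⟨P₁, P₂, ⟨f⟩⟩ := Submodule.exists_subquotient_equiv_of_map_mkQ_comap_eq_top hk
  exact ⟨k, P₁, P₂, n, π, ⟨f.trans e⟩, rfl⟩

theorem content_eq_iInf_of_directed {ι : Type*} {N : ι → Submodule R M}
    (hdir : Directed (· ≤ ·) N) (hunion : ∀ x : M, ∃ i, x ∈ N i) :
    content R v M = ⨅ i, content R v (N i) := by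
  have : Nonempty ι := ⟨(hunion 0).choose⟩
  refine le_antisymm (le_ciInf fun i => content_le_content_submodule v (N i)) ?_
  refine le_csInf ⟨1, one_mem_contentSet v⟩ fun r hr => ?_
  obtain ⟨k, hk⟩ := exists_mem_contentSet_of_directed v hdir hunion hr
  exact (ciInf_le (OrderBot.bddBelow _) k).trans (csInf_le (OrderBot.bddBelow _) hk)

end Content

theorem content_of_directed_union_general
    {K : Type*} [Field K] (vK : Valuation K ℝ≥0)
    {M : Type*} [AddCommGroup M] [Module ↥vK.integer M]
    {ι : Type*} (N : ι → Submodule ↥vK.integer M)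
    (hdir : ∀ i j, ∃ k, N i ≤ N k ∧ N j ≤ N k)
    (hunion : ∀ x : M, ∃ i, x ∈ N i) :
    content ↥vK.integer (fun a => vK ↑a) M
      = ⨅ i, content ↥vK.integer (fun a => vK ↑a) ↥(N i) :=
  content_eq_iInf_of_directed _ hdir hunion

/-- If a `K°`-module `M` is the union of a directed (filtered) family of submodules `Mᵢ`, then
`cont(M) = infᵢ cont(Mᵢ)`. -/
theorem content_of_directed_union
    {K : Type*} [Field K] (vK : Valuation K ℝ≥0)
    {M : Type*} [AddCommGroup M] [Module ↥vK.integer M]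
    {ι : Type*} [Nonempty ι] (N : ι → Submodule ↥vK.integer M)
    (hdir : ∀ i j, ∃ k, N i ≤ N k ∧ N j ≤ N k)
    (hunion : ∀ x : M, ∃ i, x ∈ N i) :
    content ↥vK.integer (fun a => vK ↑a) M
      = ⨅ i, content ↥vK.integer (fun a => vK ↑a) ↥(N i) :=
  content_of_directed_union_general vK N hdir hunion
end

section
/- Let K be a real-valued field with ring of integers K°, and let L ⊆ M be free K°-modules of finite ranks l and m respectively (L a submodule of M). Then there exist a basis e₁, …, e_m of M and elements π₁, …, π_l ∈ K° such that π₁e₁, …, π_l e_l is a basis of L. -/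
/-!
Over a valuation ring `R` the ideals are totally ordered and the finitely generated ones are
principal. Given `L ⊆ M` with a basis of `M`, the largest coordinate ideal `φ (L)` (`φ` a
coordinate functional) is generated by some `a = φ w` with `w ∈ L`, and `a` divides every
coordinate of every vector of `L`. Hence `w = a • y` with `φ y = 1`, and `ψ = φ / a` is a
functional on `L` with `ψ w = 1`, so `M = R y ⊕ ker φ` and `L = R w ⊕ ker ψ` with
`ker ψ ⊆ ker φ`; induct on the rank of `M`.
-/

open Module Submodule LinearMap

namespace Module.Basis

variable {R M : Type*} [CommRing R] [AddCommGroup M] [Module R M]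

theorem ker_coord_eq_span {ι : Type*} (b : Basis ι R M) (i : ι) :
    ker (b.coord i) = span R (b '' {i}ᶜ) := by
  ext x
  simp [b.mem_span_image, Set.subset_compl_singleton_iff]

noncomputable def kerCoord {n : ℕ} (b : Basis (Fin (n + 1)) R M) (p : Fin (n + 1)) :
    Basis (Fin n) R (ker (b.coord p)) :=
  (Basis.span (b.linearIndependent.comp _ p.succAbove_right_injective)).map
    (LinearEquiv.ofEq _ _ (by rw [ker_coord_eq_span, ← Fin.range_succAbove, Set.range_comp]))

noncomputable def mkFinConsOfKer {n : ℕ} (φ : M →ₗ[R] R) (y : M) (hy : φ y = 1)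
    (b : Basis (Fin n) R (ker φ)) : Basis (Fin (n + 1)) R M :=
  mkFinCons y b (fun c x hx h => by simpa [hy, mem_ker.mp hx] using congrArg φ h)
    fun z => ⟨-φ z, by simp [hy]⟩

@[simp]
theorem coe_mkFinConsOfKer {n : ℕ} (φ : M →ₗ[R] R) (y : M) (hy : φ y = 1)
    (b : Basis (Fin n) R (ker φ)) : ⇑(mkFinConsOfKer φ y hy b) = Fin.cons y ((↑) ∘ b) :=
  coe_mkFinCons _ _ _ _

theorem exists_eq_smul_of_dvd_repr {ι : Type*} [Fintype ι] (b : Basis ι R M) {a : R} {v : M}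
    (h : ∀ i, a ∣ b.repr v i) : ∃ y, v = a • y := by
  choose c hc using h
  refine ⟨b.equivFun.symm c, b.equivFun.injective ?_⟩
  rw [map_smul, LinearEquiv.apply_symm_apply]
  ext i
  simp [hc]

end Module.Basis

namespace LinearMap

variable {R N : Type*} [CommRing R] [AddCommGroup N] [Module R N]

theorem exists_eq_smul_of_forall_dvd [IsDomain R] {ψ : N →ₗ[R] R} {a : R} (ha : a ≠ 0)
    (h : ∀ x, a ∣ ψ x) : ∃ ψ' : N →ₗ[R] R, ψ = a • ψ' := by
  choose c hc using h
  refine ⟨{ toFun := c, map_add' := fun x y => ?_, map_smul' := fun r x => ?_ }, ext hc⟩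
  · exact mul_left_cancel₀ ha (by rw [mul_add, ← hc, ← hc, ← hc, map_add])
  · exact mul_left_cancel₀ ha (by rw [RingHom.id_apply, smul_eq_mul, mul_left_comm, ← hc, ← hc,
      map_smul, smul_eq_mul])

theorem finite_ker_of_apply_eq_one [Module.Finite R N] (ψ : N →ₗ[R] R) {w : N} (hw : ψ w = 1) :
    Module.Finite R (ker ψ) :=
  Module.Finite.of_surjective (M := N) ((LinearMap.id - ψ.smulRight w).codRestrict (ker ψ)
    fun x => by simp [hw]) fun x => ⟨x, Subtype.ext (by simp)⟩

end LinearMap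

section ValuationRing

variable {R M N : Type*} [CommRing R] [IsDomain R] [ValuationRing R]
  [AddCommGroup M] [Module R M] [AddCommGroup N] [Module R N]

theorem Module.Basis.exists_coord_dvd_coord {ι : Type*} [Finite ι] (b : Basis ι R M)
    [Module.Finite R N] {f : N →ₗ[R] M} (hf : f ≠ 0) :
    ∃ p w, b.coord p (f w) ≠ 0 ∧ ∀ i x, b.coord p (f w) ∣ b.coord i (f x) := by
  classical
  have : Nonempty ι := by
    by_contra h
    rw [not_nonempty_iff] at h
    exact hf (LinearMap.ext fun x => b.repr.injective (Subsingleton.elim _ _))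
  obtain ⟨p, hp⟩ := Finite.exists_max fun i => range (b.coord i ∘ₗ f)
  obtain ⟨a, ha⟩ := IsBezout.isPrincipal_of_FG (range (b.coord p ∘ₗ f))
    (Module.Finite.iff_fg.mp inferInstance)
  obtain ⟨w, hw⟩ : a ∈ range (b.coord p ∘ₗ f) := ha ▸ mem_span_singleton_self a
  have hdvd : ∀ i x, a ∣ b.coord i (f x) := fun i x => by
    obtain ⟨c, hc⟩ := mem_span_singleton.mp (ha ▸ hp i (mem_range_self _ x))
    exact ⟨c, by rw [← comp_apply, ← hc, smul_eq_mul, mul_comm]⟩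
  refine ⟨p, w, fun h0 => hf ?_, by simpa [← hw] using hdvd⟩
  have ha0 : a = 0 := hw.symm.trans h0
  ext x
  exact b.ext_elem fun i => by simpa [ha0] using hdvd i x

theorem ValuationRing.exists_adapted_basis_of_injective {m : ℕ} (b : Basis (Fin m) R M)
    [Module.Finite R N] {f : N →ₗ[R] M} (hf : Function.Injective f) :
    ∃ (l : ℕ) (hlm : l ≤ m) (e : Basis (Fin m) R M) (π : Fin l → R) (g : Basis (Fin l) R N),
      ∀ i, f (g i) = π i • e (Fin.castLE hlm i) := by
  induction m generalizing M N with
  | zero =>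
    have : Subsingleton M := b.repr.subsingleton
    have : Subsingleton N := hf.subsingleton
    exact ⟨0, le_rfl, b, finZeroElim, .empty N, finZeroElim⟩
  | succ m ih =>
    rcases subsingleton_or_nontrivial N with _ | _
    · exact ⟨0, Nat.zero_le _, b, finZeroElim, .empty N, finZeroElim⟩
    obtain ⟨p, w, ha, hdvd⟩ := b.exists_coord_dvd_coord (ne_zero_of_injective hf)
    set a := b.coord p (f w)
    obtain ⟨y, hy⟩ := b.exists_eq_smul_of_dvd_repr (hdvd · w)
    have hφy : b.coord p y = 1 :=
      mul_left_cancel₀ ha (by rw [mul_one, ← smul_eq_mul, ← map_smul, ← hy])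
    obtain ⟨ψ, hψ⟩ := exists_eq_smul_of_forall_dvd (ψ := b.coord p ∘ₗ f) ha (hdvd p)
    have hψw : ψ w = 1 :=
      mul_left_cancel₀ ha (by rw [mul_one]; exact (LinearMap.congr_fun hψ w).symm)
    have := finite_ker_of_apply_eq_one ψ hψw
    let f' : ker ψ →ₗ[R] ker (b.coord p) :=
      f.restrict fun x hx => by simpa [mem_ker.mp hx] using LinearMap.congr_fun hψ x
    obtain ⟨l, hlm, e, π, g, hg⟩ :=
      ih (b.kerCoord p) (f := f') fun x x' h => Subtype.ext (hf (congrArg Subtype.val h))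
    refine ⟨l + 1, Nat.succ_le_succ hlm, Basis.mkFinConsOfKer _ y hφy e, Fin.cons a π,
      Basis.mkFinConsOfKer ψ w hψw g, Fin.cases ?_ fun i => ?_⟩
    · simpa using hy
    · simpa [f'] using congrArg Subtype.val (hg i)

end ValuationRing

open scoped NNReal

/-- Elementary divisors for a pair of free modules over the ring of integers `K°` of a
real-valued field `K`: if `L ⊆ M` are free `K°`-modules of ranks `l` and `m`, then there is a
basis `e₁, …, e_m` of `M` and elements `π₁, …, π_l ∈ K°` such that `π₁e₁, …, π_l e_l` is a basis
of `L`. -/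
theorem exists_adapted_basis_of_free_submodule
    {K : Type*} [Field K] (vK : Valuation K ℝ≥0)
    {M : Type*} [AddCommGroup M] [Module ↥vK.integer M]
    {l m : ℕ} (bM : Module.Basis (Fin m) ↥vK.integer M)
    (L : Submodule ↥vK.integer M) (bL : Module.Basis (Fin l) ↥vK.integer ↥L) :
    ∃ (hlm : l ≤ m) (e : Module.Basis (Fin m) ↥vK.integer M) (π : Fin l → ↥vK.integer)
      (f : Module.Basis (Fin l) ↥vK.integer ↥L),
      ∀ i : Fin l, ((f i : M)) = π i • e (Fin.castLE hlm i) := by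
  have := Module.Finite.of_basis bL
  obtain ⟨l', hlm, e, π, f, hf⟩ :=
    ValuationRing.exists_adapted_basis_of_injective bM L.injective_subtype
  obtain rfl : l' = l := Fin.equiv_iff_eq.mp ⟨f.indexEquiv bL⟩
  exact ⟨hlm, e, π, f, hf⟩
end

section
/- Let K be a real-valued field and M a module over its ring of integers K°. Then: (i) the adic seminorm ‖·‖_adic is the maximal K°-module seminorm on M bounded by 1, i.e., it is a K°-module seminorm with ‖x‖_adic ≤ 1 for all x, and every K°-module seminorm ‖·‖' on M with ‖x‖' ≤ 1 for all x satisfies ‖x‖' ≤ ‖x‖_adic; (ii) for x ∈ M one has ‖x‖_adic = 0 if and only if x is divisible. -/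
open scoped NNReal

/-- A seminorm on a module over a seminormed ring. -/
def IsModuleSeminorm {A M : Type*} [CommRing A] [AddCommGroup M] [Module A M]
    (fA : A → ℝ≥0) (fM : M → ℝ≥0) : Prop :=
  IsGroupSeminorm fM ∧ ∀ (a : A) (m : M), fM (a • m) ≤ fA a * fM m

/-- The adic seminorm on a `K°`-module `M`: `‖x‖ = inf {|a| : a ∈ K°, x ∈ aM}`. -/
noncomputable def adicSeminorm {K : Type*} [Field K] (vK : Valuation K ℝ≥0)
    (M : Type*) [AddCommGroup M] [Module ↥vK.integer M] (x : M) : ℝ≥0 :=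
  sInf { r | ∃ a : ↥vK.integer, (∃ y : M, x = a • y) ∧ r = vK ↑a }

/-!
Because `K°` is a valuation ring, `|a| ≤ |b|` forces `b ∣ a` and hence `aM ⊆ bM`; so the sets
`aM` are totally ordered by `|a|`, which gives the ultrametric inequality, and `x` has adic
seminorm `0` exactly when it lies in `aM` for `|a|` arbitrarily small, i.e. in every `πⁿM`.
When the absolute value is trivial, `|a| < 1` already forces `a = 0`. Maximality holds because a
module seminorm bounded by `1` satisfies `‖a • y‖' ≤ |a| · ‖y‖' ≤ |a|`.
-/

section AdicSeminorm

variable {K : Type*} [Field K] {vK : Valuation K ℝ≥0}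
  {M : Type*} [AddCommGroup M] [Module vK.integer M]

theorem adicSeminorm_le_of_eq_smul {x y : M} {a : vK.integer} (h : x = a • y) :
    adicSeminorm vK M x ≤ vK a :=
  csInf_le (OrderBot.bddBelow _) ⟨a, ⟨y, h⟩, rfl⟩

theorem le_adicSeminorm_of_forall_eq_smul {x : M} {r : ℝ≥0}
    (h : ∀ (a : vK.integer) (y : M), x = a • y → r ≤ vK a) : r ≤ adicSeminorm vK M x :=
  le_csInf ⟨_, 1, ⟨x, (one_smul _ x).symm⟩, rfl⟩ fun _ ⟨a, ⟨y, hy⟩, hr⟩ => hr ▸ h a y hy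

theorem exists_eq_smul_of_adicSeminorm_lt {x : M} {r : ℝ≥0} (h : adicSeminorm vK M x < r) :
    ∃ a : vK.integer, vK a < r ∧ ∃ y : M, x = a • y := by
  by_contra hr
  exact h.not_ge (le_adicSeminorm_of_forall_eq_smul fun a y hy =>
    not_lt.mp fun ha => hr ⟨a, ha, y, hy⟩)

theorem adicSeminorm_le_one (x : M) : adicSeminorm vK M x ≤ 1 := by
  simpa using adicSeminorm_le_of_eq_smul (one_smul vK.integer x).symm

theorem adicSeminorm_zero : adicSeminorm vK M 0 = 0 :=
  le_antisymm (by simpa using adicSeminorm_le_of_eq_smul (zero_smul vK.integer (0 : M)).symm)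
    bot_le

theorem exists_eq_smul_of_valuation_le {x y : M} {a b : vK.integer} (hx : x = a • y)
    (h : vK a ≤ vK b) : ∃ z : M, x = b • z := by
  obtain ⟨d, rfl⟩ := (Valuation.integer.integers vK).dvd_of_le h
  exact ⟨d • y, by rw [hx, mul_smul]⟩

theorem adicSeminorm_sub_le_of_eq_smul {x y x' y' : M} {a b : vK.integer} (hx : x = a • x')
    (hy : y = b • y') : adicSeminorm vK M (x - y) ≤ max (vK a) (vK b) := by
  rcases le_total (vK a) (vK b) with hab | hba
  · obtain ⟨z, hz⟩ := exists_eq_smul_of_valuation_le hx hab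
    have hxy : x - y = b • (z - y') := by rw [smul_sub, hz, hy]
    exact (adicSeminorm_le_of_eq_smul hxy).trans (le_max_right _ _)
  · obtain ⟨z, hz⟩ := exists_eq_smul_of_valuation_le hy hba
    have hxy : x - y = a • (x' - z) := by rw [smul_sub, hz, hx]
    exact (adicSeminorm_le_of_eq_smul hxy).trans (le_max_left _ _)

theorem adicSeminorm_sub_le (x y : M) :
    adicSeminorm vK M (x - y) ≤ max (adicSeminorm vK M x) (adicSeminorm vK M y) := by
  by_contra! h
  obtain ⟨a, ha, x', hx⟩ := exists_eq_smul_of_adicSeminorm_lt ((le_max_left _ _).trans_lt h)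
  obtain ⟨b, hb, y', hy⟩ := exists_eq_smul_of_adicSeminorm_lt ((le_max_right _ _).trans_lt h)
  exact (adicSeminorm_sub_le_of_eq_smul hx hy).not_gt (max_lt ha hb)

theorem adicSeminorm_smul_le (a : vK.integer) (m : M) :
    adicSeminorm vK M (a • m) ≤ vK a * adicSeminorm vK M m := by
  rcases eq_or_ne a 0 with rfl | ha
  · simp [adicSeminorm_zero]
  have hpos : 0 < vK a := by simpa [pos_iff_ne_zero] using ha
  rw [← div_le_iff₀' hpos]
  refine le_adicSeminorm_of_forall_eq_smul fun b y hy => ?_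
  rw [div_le_iff₀' hpos, ← vK.map_mul]
  exact adicSeminorm_le_of_eq_smul (show a • m = (a * b) • y by rw [hy, mul_smul])

theorem isModuleSeminorm_adicSeminorm :
    IsModuleSeminorm (fun a : vK.integer => vK a) (adicSeminorm vK M) :=
  ⟨⟨adicSeminorm_zero, adicSeminorm_sub_le⟩, adicSeminorm_smul_le⟩

theorem IsModuleSeminorm.le_adicSeminorm {w : M → ℝ≥0}
    (hw : IsModuleSeminorm (fun a : vK.integer => vK a) w) (hw1 : ∀ x, w x ≤ 1) (x : M) :
    w x ≤ adicSeminorm vK M x :=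
  le_adicSeminorm_of_forall_eq_smul fun a y hy =>
    calc w x ≤ vK a * w y := hy ▸ hw.2 a y
      _ ≤ vK a := mul_le_of_le_one_right' (hw1 y)

theorem adicSeminorm_eq_zero_of_forall_eq_pow_smul {π : vK.integer} (hπ : vK π < 1) {x : M}
    (hx : ∀ n : ℕ, ∃ y : M, x = π ^ n • y) : adicSeminorm vK M x = 0 := by
  by_contra! h
  obtain ⟨n, hn⟩ := exists_pow_lt_of_lt_one (pos_iff_ne_zero.mpr h) hπ
  obtain ⟨y, hy⟩ := hx n
  exact (adicSeminorm_le_of_eq_smul hy).not_gt (by simpa using hn)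

theorem exists_eq_pow_smul_of_adicSeminorm_eq_zero {π : vK.integer}
    (hπ : π = 0 → ∀ y : K, y ≠ 0 → vK y = 1) {x : M} (hx : adicSeminorm vK M x = 0) (n : ℕ) :
    ∃ y : M, x = π ^ n • y := by
  suffices ∃ a : vK.integer, vK a ≤ vK ↑(π ^ n) ∧ ∃ y : M, x = a • y by
    obtain ⟨a, ha, y, hy⟩ := this
    exact exists_eq_smul_of_valuation_le hy ha
  rcases eq_zero_or_pos (vK ↑(π ^ n)) with hπn | hπn
  · obtain ⟨hπ0, -⟩ : π = 0 ∧ n ≠ 0 := by simpa using hπn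
    obtain ⟨a, ha, hy⟩ := exists_eq_smul_of_adicSeminorm_lt (hx.trans_lt one_pos)
    have ha0 : vK a = 0 := by
      by_contra hne
      exact ha.ne (hπ hπ0 _ (by simpa using hne))
    exact ⟨a, ha0.trans_le bot_le, hy⟩
  · obtain ⟨a, ha, hy⟩ := exists_eq_smul_of_adicSeminorm_lt (hx.trans_lt hπn)
    exact ⟨a, ha.le, hy⟩

end AdicSeminorm

/-- For a `K°`-module `M`: (i) the adic seminorm is the maximal `K°`-module seminorm on `M`
bounded by `1`; (ii) `‖x‖_adic = 0` iff `x` is divisible (infinitely `π`-divisible, where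
`π ∈ K°°` is nonzero if the absolute value of `K` is nontrivial and `π = 0` if it is trivial). -/
theorem adicSeminorm_maximal_and_kernel
    {K : Type*} [Field K] (vK : Valuation K ℝ≥0)
    (M : Type*) [AddCommGroup M] [Module ↥vK.integer M]
    (π : ↥vK.integer) (hπlt : vK ↑π < 1)
    (hπtriv : π = 0 ↔ ∀ y : K, y ≠ 0 → vK y = 1) :
    -- (i) maximal module seminorm bounded by 1
    (IsModuleSeminorm (fun a : ↥vK.integer => vK ↑a) (adicSeminorm vK M) ∧
      (∀ x : M, adicSeminorm vK M x ≤ 1) ∧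
      (∀ w : M → ℝ≥0, IsModuleSeminorm (fun a : ↥vK.integer => vK ↑a) w →
        (∀ x : M, w x ≤ 1) → ∀ x : M, w x ≤ adicSeminorm vK M x)) ∧
    -- (ii) kernel = divisible elements
    (∀ x : M, adicSeminorm vK M x = 0 ↔ ∀ n : ℕ, ∃ y : M, x = (π ^ n) • y) :=
  ⟨⟨isModuleSeminorm_adicSeminorm, adicSeminorm_le_one, fun _ hw hw1 => hw.le_adicSeminorm hw1⟩,
    fun _ => ⟨exists_eq_pow_smul_of_adicSeminorm_eq_zero hπtriv.mp,
      adicSeminorm_eq_zero_of_forall_eq_pow_smul hπlt⟩⟩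
end
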